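/- Correctness of the TCO operational semantics: for any core Simplicity expression t : A ⊢ B and value v : A, executing the TCO instruction sequence ⟪t⟫_off from the standard initial state does not crash and produces the same final state as the non-TCO translation: read frame ⟨v⟩_A with cursor at the beginning, write frame ⟨⟦t⟧(v)⟩_B with cursor at the end. -/

import Mathlib

inductive Ty : Type
  | unit : Ty
  | sum : Ty → Ty → Ty
  | prod : Ty → Ty → Ty

def Ty.interp : Ty → Type
  | .unit => Unit
  | .sum a b => Sum a.interp b.interp
  | .prod a b => a.interp × b.interp

inductive Term : Ty → Ty → Type
  | iden {A : Ty} : Term A A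
  | comp {A B C : Ty} : Term A B → Term B C → Term A C
  | unit {A : Ty} : Term A .unit
  | injl {A B C : Ty} : Term A B → Term A (.sum B C)
  | injr {A B C : Ty} : Term A C → Term A (.sum B C)
  | case {A B C D : Ty} : Term (.prod A C) D → Term (.prod B C) D →
      Term (.prod (.sum A B) C) D
  | pair {A B C : Ty} : Term A B → Term A C → Term A (.prod B C)
  | take {A B C : Ty} : Term A C → Term (.prod A B) C
  | drop {A B C : Ty} : Term B C → Term (.prod A B) C

def Term.eval : {A B : Ty} → Term A B → A.interp → B.interp
  | _, _, .iden, a => a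
  | _, _, .comp s t, a => t.eval (s.eval a)
  | _, _, .unit, _ => ()
  | _, _, .injl t, a => Sum.inl (t.eval a)
  | _, _, .injr t, a => Sum.inr (t.eval a)
  | _, _, .case s t, x =>
      match x with
      | (Sum.inl a, c) => s.eval (a, c)
      | (Sum.inr b, c) => t.eval (b, c)
  | _, _, .pair s t, a => (s.eval a, t.eval a)
  | _, _, .take t, x => t.eval x.1
  | _, _, .drop t, x => t.eval x.2
def Ty.bitSize : Ty → ℕ
  | .unit => 0
  | .sum a b => 1 + max a.bitSize b.bitSize
  | .prod a b => a.bitSize + b.bitSize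

def padl (a b : Ty) : ℕ := max a.bitSize b.bitSize - a.bitSize
def padr (a b : Ty) : ℕ := max a.bitSize b.bitSize - b.bitSize

abbrev Cell := Option Bool

def Ty.encode : (A : Ty) → A.interp → List Cell
  | .unit, _ => []
  | .sum a b, Sum.inl x => (some false :: List.replicate (padl a b) none) ++ a.encode x
  | .sum a b, Sum.inr y => (some true :: List.replicate (padr a b) none) ++ b.encode y
  | .prod a b, x => a.encode x.1 ++ b.encode x.2
/-- A frame of the Bit Machine: an array of cells together with a cursor. -/
structure Frame where
  cells : List Cell
  cursor : ℕ

/-- A state of the Bit Machine: a stack of read frames and a stack of write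
frames (the head of each list is the active frame). -/
structure MState where
  readStack : List Frame
  writeStack : List Frame

/-- Total number of cells in both stacks. -/
def MState.cellCount (s : MState) : ℕ :=
  (s.readStack.map fun f => f.cells.length).sum +
    (s.writeStack.map fun f => f.cells.length).sum

def nopI (s : MState) : Option MState := some s

def writeI (b : Bool) (s : MState) : Option MState :=
  match s.writeStack with
  | [] => none
  | w :: ws =>
    if w.cells[w.cursor]? = some none then
      some { s with writeStack := ⟨w.cells.set w.cursor (some b), w.cursor + 1⟩ :: ws }
    else none

def copyI (n : ℕ) (s : MState) : Option MState :=
  match s.readStack, s.writeStack with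
  | r :: _, w :: ws =>
    if r.cursor + n ≤ r.cells.length ∧ w.cursor + n ≤ w.cells.length ∧
        ((w.cells.drop w.cursor).take n).all Option.isNone then
      some { s with writeStack :=
        ⟨w.cells.take w.cursor ++ (r.cells.drop r.cursor).take n ++
            w.cells.drop (w.cursor + n),
          w.cursor + n⟩ :: ws }
    else none
  | _, _ => none

def skipI (n : ℕ) (s : MState) : Option MState :=
  match s.writeStack with
  | [] => none
  | w :: ws =>
    if w.cursor + n ≤ w.cells.length then
      some { s with writeStack := ⟨w.cells, w.cursor + n⟩ :: ws }
    else none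

def fwdI (n : ℕ) (s : MState) : Option MState :=
  match s.readStack with
  | [] => none
  | r :: rs =>
    if r.cursor + n ≤ r.cells.length then
      some { s with readStack := ⟨r.cells, r.cursor + n⟩ :: rs }
    else none

def bwdI (n : ℕ) (s : MState) : Option MState :=
  match s.readStack with
  | [] => none
  | r :: rs =>
    if n ≤ r.cursor then
      some { s with readStack := ⟨r.cells, r.cursor - n⟩ :: rs }
    else none

def newFrameI (n : ℕ) (s : MState) : Option MState :=
  some { s with writeStack := ⟨List.replicate n none, 0⟩ :: s.writeStack }

def moveFrameI (s : MState) : Option MState :=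
  match s.writeStack with
  | w :: w' :: ws =>
    some { readStack := ⟨w.cells, 0⟩ :: s.readStack, writeStack := w' :: ws }
  | _ => none

def dropFrameI (s : MState) : Option MState :=
  match s.readStack with
  | _ :: r :: rs => some { s with readStack := r :: rs }
  | _ => none

/-- The `read` instruction: returns the bit under the active read frame's
cursor, crashing on an undefined cell or an out-of-range cursor. -/
def readI (s : MState) : Option Bool :=
  match s.readStack with
  | r :: _ =>
    match r.cells[r.cursor]? with
    | some (some b) => some b
    | _ => none
  | [] => none

/-- A run of the machine: from a state, either crash, or produce the final
state together with the maximum of `MState.cellCount` over all states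
encountered during execution (including the initial and final ones). -/
abbrev Run := MState → Option (MState × ℕ)

def instr (f : MState → Option MState) : Run := fun s =>
  (f s).map fun s' => (s', max s.cellCount s'.cellCount)

def seqRun (p q : Run) : Run := fun s => do
  let (s₁, n₁) ← p s
  let (s₂, n₂) ← q s₁
  pure (s₂, max n₁ n₂)

/-- Translation of core Simplicity to the Bit Machine: `runCore t` is the
state transformation (with cell-usage tracking) of executing `⟪t⟫`. -/
def runCore : {A B : Ty} → Term A B → Run
  | A, _, .iden => instr (copyI A.bitSize)
  | _, _, @Term.comp _ B _ s t =>
      seqRun (instr (newFrameI B.bitSize))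
        (seqRun (runCore s)
          (seqRun (instr moveFrameI)
            (seqRun (runCore t) (instr dropFrameI))))
  | _, _, .unit => instr nopI
  | _, _, @Term.injl _ B C t =>
      seqRun (instr (writeI false)) (seqRun (instr (skipI (padl B C))) (runCore t))
  | _, _, @Term.injr _ B C t =>
      seqRun (instr (writeI true)) (seqRun (instr (skipI (padr B C))) (runCore t))
  | _, _, @Term.case A B _ _ s t => fun st =>
      match readI st with
      | some false =>
          seqRun (instr (fwdI (1 + padl A B)))
            (seqRun (runCore s) (instr (bwdI (1 + padl A B)))) st
      | some true =>
          seqRun (instr (fwdI (1 + padr A B)))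
            (seqRun (runCore t) (instr (bwdI (1 + padr A B)))) st
      | none => none
  | _, _, .pair s t => seqRun (runCore s) (runCore t)
  | _, _, .take t => runCore t
  | _, _, @Term.drop A _ _ t =>
      seqRun (instr (fwdI A.bitSize)) (seqRun (runCore t) (instr (bwdI A.bitSize)))

/-- The standard initial state for evaluating `t : A ⊢ B` on input `v`. -/
def initState (A B : Ty) (v : A.interp) : MState :=
  { readStack := [⟨A.encode v, 0⟩],
    writeStack := [⟨List.replicate B.bitSize none, 0⟩] }

/-- The expected final state after evaluating `t : A ⊢ B` on input `v`
with output `w`. -/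
def finalState (A B : Ty) (v : A.interp) (w : B.interp) : MState :=
  { readStack := [⟨A.encode v, 0⟩],
    writeStack := [⟨B.encode w, B.bitSize⟩] }

/-- The TCO translation of core Simplicity to the Bit Machine.
`runTCO t false` is `⟪t⟫_off` and `runTCO t true` is `⟪t⟫_on`. -/
def runTCO : {A B : Ty} → Term A B → Bool → Run
  | A, _, .iden, tail =>
      if tail then seqRun (instr (copyI A.bitSize)) (instr dropFrameI)
      else instr (copyI A.bitSize)
  | _, _, @Term.comp _ B _ s t, tail =>
      seqRun (instr (newFrameI B.bitSize))
        (seqRun (runTCO s tail) (seqRun (instr moveFrameI) (runTCO t true)))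
  | _, _, .unit, tail => if tail then instr dropFrameI else instr nopI
  | _, _, @Term.injl _ B C t, tail =>
      seqRun (instr (writeI false)) (seqRun (instr (skipI (padl B C))) (runTCO t tail))
  | _, _, @Term.injr _ B C t, tail =>
      seqRun (instr (writeI true)) (seqRun (instr (skipI (padr B C))) (runTCO t tail))
  | _, _, @Term.case A B _ _ s t, tail => fun st =>
      match readI st with
      | some false =>
          if tail then seqRun (instr (fwdI (1 + padl A B))) (runTCO s true) st
          else
            seqRun (instr (fwdI (1 + padl A B)))
              (seqRun (runTCO s false) (instr (bwdI (1 + padl A B)))) st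
      | some true =>
          if tail then seqRun (instr (fwdI (1 + padr A B))) (runTCO t true) st
          else
            seqRun (instr (fwdI (1 + padr A B)))
              (seqRun (runTCO t false) (instr (bwdI (1 + padr A B)))) st
      | none => none
  | _, _, .pair s t, tail => seqRun (runTCO s false) (runTCO t tail)
  | _, _, .take t, tail => runTCO t tail
  | _, _, @Term.drop A _ _ t, tail =>
      if tail then seqRun (instr (fwdI A.bitSize)) (runTCO t true)
      else
        seqRun (instr (fwdI A.bitSize))
          (seqRun (runTCO t false) (instr (bwdI A.bitSize)))

/- ===== auxiliary lemmas ===== -/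

theorem take_app {α} (a b : List α) {n : ℕ} (h : n = a.length) : (a ++ b).take n = a := by
  subst h; exact List.take_left

theorem drop_app {α} (a b : List α) {n : ℕ} (h : n = a.length) : (a ++ b).drop n = b := by
  subst h; exact List.drop_left

theorem getElem?_app {α} (a b : List α) {n : ℕ} (h : n = a.length) :
    (a ++ b)[n]? = b[0]? := by
  subst h; rw [List.getElem?_append_right le_rfl]; simp

theorem set_app {α} (a b : List α) {n : ℕ} (x : α) (h : n = a.length) :
    (a ++ b).set n x = a ++ b.set 0 x := by
  subst h; rw [List.set_append_right _ _ le_rfl]; simp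

theorem Ty.encode_length : ∀ (A : Ty) (v : A.interp), (A.encode v).length = A.bitSize
  | .unit, _ => rfl
  | .sum a b, Sum.inl x => by
      have h := Nat.le_max_left a.bitSize b.bitSize
      have := Ty.encode_length a x
      simp [Ty.encode, Ty.bitSize, padl]; omega
  | .sum a b, Sum.inr y => by
      have h := Nat.le_max_right a.bitSize b.bitSize
      have := Ty.encode_length b y
      simp [Ty.encode, Ty.bitSize, padr]; omega
  | .prod a b, x => by
      have := Ty.encode_length a x.1
      have := Ty.encode_length b x.2
      simp [Ty.encode, Ty.bitSize]; omega

theorem instr_some {f : MState → Option MState} {s s' : MState} (h : f s = some s') :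
    instr f s = some (s', max s.cellCount s'.cellCount) := by simp [instr, h]

theorem seqRun_some {p q : Run} {s s₁ s₂ : MState} {n₁ n₂ : ℕ}
    (h₁ : p s = some (s₁, n₁)) (h₂ : q s₁ = some (s₂, n₂)) :
    seqRun p q s = some (s₂, max n₁ n₂) := by simp [seqRun, h₁, h₂]

theorem copyI_eq (e l₁ l₂ : List Cell) (rest : List Frame) (w₁ w₂ : List Cell)
    (ws : List Frame) :
    copyI e.length ⟨⟨l₁ ++ e ++ l₂, l₁.length⟩ :: rest,
        ⟨w₁ ++ List.replicate e.length (none : Cell) ++ w₂, w₁.length⟩ :: ws⟩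
      = some ⟨⟨l₁ ++ e ++ l₂, l₁.length⟩ :: rest, ⟨w₁ ++ e ++ w₂, w₁.length + e.length⟩ :: ws⟩ := by
  have h1 : (w₁ ++ List.replicate e.length (none : Cell) ++ w₂).take w₁.length = w₁ := by
    rw [List.append_assoc]; exact take_app _ _ rfl
  have h2 : ((l₁ ++ e ++ l₂).drop l₁.length).take e.length = e := by
    rw [List.append_assoc, drop_app _ _ rfl]; exact take_app _ _ rfl
  have h3 : (w₁ ++ List.replicate e.length (none : Cell) ++ w₂).drop (w₁.length + e.length) = w₂ :=
    drop_app _ _ (by simp)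
  have h4 : ((((w₁ ++ List.replicate e.length (none : Cell) ++ w₂)).drop w₁.length).take e.length).all Option.isNone = true := by
    rw [List.append_assoc, drop_app _ _ rfl, take_app _ _ (by simp)]
    simp
  simp only [copyI]
  rw [if_pos ⟨by simp, by simp, h4⟩, h1, h2, h3]

theorem writeI_eq (b : Bool) (rs : List Frame) (w₁ tl w₂ : List Cell) (ws : List Frame) :
    writeI b ⟨rs, ⟨w₁ ++ ((none : Cell) :: tl) ++ w₂, w₁.length⟩ :: ws⟩
      = some ⟨rs, ⟨w₁ ++ (some b :: tl) ++ w₂, w₁.length + 1⟩ :: ws⟩ := by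
  have hg : (w₁ ++ ((none : Cell) :: tl) ++ w₂)[w₁.length]? = some none := by
    rw [List.append_assoc, getElem?_app _ _ rfl]; simp
  have hs : (w₁ ++ ((none : Cell) :: tl) ++ w₂).set w₁.length (some b)
      = w₁ ++ (some b :: tl) ++ w₂ := by
    rw [List.append_assoc, set_app _ _ _ rfl]; simp
  simp only [writeI]
  rw [if_pos hg, hs]

theorem skipI_eq (n : ℕ) (rs : List Frame) (c : List Cell) (k : ℕ) (ws : List Frame)
    (h : k + n ≤ c.length) :
    skipI n ⟨rs, ⟨c, k⟩ :: ws⟩ = some ⟨rs, ⟨c, k + n⟩ :: ws⟩ := by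
  simp [skipI, h]

theorem fwdI_eq (n : ℕ) (c : List Cell) (k : ℕ) (rs : List Frame) (ws : List Frame)
    (h : k + n ≤ c.length) :
    fwdI n ⟨⟨c, k⟩ :: rs, ws⟩ = some ⟨⟨c, k + n⟩ :: rs, ws⟩ := by
  simp [fwdI, h]

theorem bwdI_eq (n : ℕ) (c : List Cell) (k : ℕ) (rs : List Frame) (ws : List Frame)
    (h : n ≤ k) :
    bwdI n ⟨⟨c, k⟩ :: rs, ws⟩ = some ⟨⟨c, k - n⟩ :: rs, ws⟩ := by
  simp [bwdI, h]

theorem dropFrameI_eq (f r : Frame) (rs ws : List Frame) :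
    dropFrameI ⟨f :: r :: rs, ws⟩ = some ⟨r :: rs, ws⟩ := rfl

theorem newFrameI_eq (n : ℕ) (rs ws : List Frame) :
    newFrameI n ⟨rs, ws⟩ = some ⟨rs, ⟨List.replicate n none, 0⟩ :: ws⟩ := rfl

theorem moveFrameI_eq (w w' : Frame) (rs ws : List Frame) :
    moveFrameI ⟨rs, w :: w' :: ws⟩ = some ⟨⟨w.cells, 0⟩ :: rs, w' :: ws⟩ := rfl

theorem instr_ex {f : MState → Option MState} {s s' : MState} (h : f s = some s') :
    ∃ n, instr f s = some (s', n) := ⟨_, instr_some h⟩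

theorem seqRun_ex {p q : Run} {s s₁ s₂ : MState} {n₁ : ℕ}
    (h₁ : p s = some (s₁, n₁)) (h₂ : ∃ n, q s₁ = some (s₂, n)) :
    ∃ n, seqRun p q s = some (s₂, n) := by
  obtain ⟨n₂, h₂⟩ := h₂
  exact ⟨_, seqRun_some h₁ h₂⟩

/- ===== main lemma ===== -/

theorem runTCO_main {A B : Ty} (t : Term A B) : ∀ (v : A.interp) (tail : Bool)
    (l₁ l₂ : List Cell) (rest : List Frame) (w₁ w₂ : List Cell) (ws : List Frame),
    (tail = true → rest ≠ []) →
    ∃ n, runTCO t tail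
        ⟨⟨l₁ ++ A.encode v ++ l₂, l₁.length⟩ :: rest,
         ⟨w₁ ++ List.replicate B.bitSize (none : Cell) ++ w₂, w₁.length⟩ :: ws⟩
      = some (⟨if tail then rest else ⟨l₁ ++ A.encode v ++ l₂, l₁.length⟩ :: rest,
               ⟨w₁ ++ B.encode (t.eval v) ++ w₂, w₁.length + B.bitSize⟩ :: ws⟩, n) := by
  induction t with
  | @iden A =>
    intro v tail l₁ l₂ rest w₁ w₂ ws hne
    cases tail with
    | false =>
      simp only [runTCO, Bool.false_eq_true, if_false, Term.eval]
      rw [show A.bitSize = (A.encode v).length from (A.encode_length v).symm]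
      exact instr_ex (copyI_eq ..)
    | true =>
      obtain ⟨r, rs, rfl⟩ : ∃ r rs, rest = r :: rs := by
        cases rest with
        | nil => exact absurd rfl (hne rfl)
        | cons r rs => exact ⟨r, rs, rfl⟩
      simp only [runTCO, reduceIte, Term.eval]
      rw [show A.bitSize = (A.encode v).length from (A.encode_length v).symm]
      exact seqRun_ex (instr_some (copyI_eq ..)) (instr_ex (dropFrameI_eq ..))
  | @comp A B C s t ihs iht =>
    intro v tail l₁ l₂ rest w₁ w₂ ws hne
    obtain ⟨n₁, hs⟩ := ihs v tail l₁ l₂ rest [] []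
      (⟨w₁ ++ List.replicate C.bitSize (none : Cell) ++ w₂, w₁.length⟩ :: ws) hne
    obtain ⟨n₂, ht⟩ := iht (s.eval v) true [] []
      (if tail then rest else ⟨l₁ ++ A.encode v ++ l₂, l₁.length⟩ :: rest) w₁ w₂ ws
      (by cases tail <;> simp_all)
    simp only [List.nil_append, List.append_nil, List.length_nil, Nat.zero_add] at hs ht
    simp only [runTCO, Term.eval]
    exact seqRun_ex (instr_some (newFrameI_eq ..))
      (seqRun_ex hs (seqRun_ex (instr_some (moveFrameI_eq ..)) ⟨n₂, ht⟩))
  | @unit A =>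
    intro v tail l₁ l₂ rest w₁ w₂ ws hne
    cases tail with
    | false =>
      simp only [runTCO, Bool.false_eq_true, if_false]
      exact instr_ex (f := nopI) rfl
    | true =>
      obtain ⟨r, rs, rfl⟩ : ∃ r rs, rest = r :: rs := by
        cases rest with
        | nil => exact absurd rfl (hne rfl)
        | cons r rs => exact ⟨r, rs, rfl⟩
      simp only [runTCO, reduceIte]
      exact instr_ex (dropFrameI_eq ..)
  | @injl A B C t ih =>
    intro v tail l₁ l₂ rest w₁ w₂ ws hne
    have hle : B.bitSize ≤ max B.bitSize C.bitSize := Nat.le_max_left _ _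
    have hsplit : List.replicate ((Ty.sum B C).bitSize) (none : Cell)
        = (none : Cell) :: (List.replicate (padl B C) (none : Cell)
            ++ List.replicate B.bitSize (none : Cell)) := by
      rw [show (Ty.sum B C).bitSize = 1 + (padl B C + B.bitSize) by
        simp only [Ty.bitSize, padl]; omega]
      rw [List.replicate_add]; simp
    obtain ⟨n, ht⟩ := ih v tail l₁ l₂ rest
      (w₁ ++ some false :: List.replicate (padl B C) (none : Cell)) w₂ ws hne
    simp only [runTCO, hsplit, Term.eval]
    refine seqRun_ex (instr_some (writeI_eq ..)) ?_
    refine seqRun_ex (instr_some (skipI_eq _ _ _ _ _ (by simp; omega))) ?_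
    have e1 : w₁ ++ some false :: (List.replicate (padl B C) (none : Cell)
          ++ List.replicate B.bitSize (none : Cell)) ++ w₂
        = (w₁ ++ some false :: List.replicate (padl B C) (none : Cell))
          ++ List.replicate B.bitSize (none : Cell) ++ w₂ := by
      simp only [List.append_assoc, List.cons_append]
    have e2 : w₁.length + 1 + padl B C
        = (w₁ ++ some false :: List.replicate (padl B C) (none : Cell)).length := by
      simp; omega
    have e3 : w₁.length + (Ty.sum B C).bitSize
        = (w₁ ++ some false :: List.replicate (padl B C) (none : Cell)).length + B.bitSize := by
      simp only [Ty.bitSize, padl]; simp; omega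
    have e4 : w₁ ++ Ty.encode (Ty.sum B C) (Sum.inl (t.eval v)) ++ w₂
        = (w₁ ++ some false :: List.replicate (padl B C) (none : Cell))
          ++ B.encode (t.eval v) ++ w₂ := by
      simp [Ty.encode]
    rw [e1, e2, e3, e4]
    exact ⟨n, ht⟩
  | @injr A B C t ih =>
    intro v tail l₁ l₂ rest w₁ w₂ ws hne
    have hle : C.bitSize ≤ max B.bitSize C.bitSize := Nat.le_max_right _ _
    have hsplit : List.replicate ((Ty.sum B C).bitSize) (none : Cell)
        = (none : Cell) :: (List.replicate (padr B C) (none : Cell)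
            ++ List.replicate C.bitSize (none : Cell)) := by
      rw [show (Ty.sum B C).bitSize = 1 + (padr B C + C.bitSize) by
        simp only [Ty.bitSize, padr]; omega]
      rw [List.replicate_add]; simp
    obtain ⟨n, ht⟩ := ih v tail l₁ l₂ rest
      (w₁ ++ some true :: List.replicate (padr B C) (none : Cell)) w₂ ws hne
    simp only [runTCO, hsplit, Term.eval]
    refine seqRun_ex (instr_some (writeI_eq ..)) ?_
    refine seqRun_ex (instr_some (skipI_eq _ _ _ _ _ (by simp; omega))) ?_
    have e1 : w₁ ++ some true :: (List.replicate (padr B C) (none : Cell)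
          ++ List.replicate C.bitSize (none : Cell)) ++ w₂
        = (w₁ ++ some true :: List.replicate (padr B C) (none : Cell))
          ++ List.replicate C.bitSize (none : Cell) ++ w₂ := by
      simp only [List.append_assoc, List.cons_append]
    have e2 : w₁.length + 1 + padr B C
        = (w₁ ++ some true :: List.replicate (padr B C) (none : Cell)).length := by
      simp; omega
    have e3 : w₁.length + (Ty.sum B C).bitSize
        = (w₁ ++ some true :: List.replicate (padr B C) (none : Cell)).length + C.bitSize := by
      simp only [Ty.bitSize, padr]; simp; omega
    have e4 : w₁ ++ Ty.encode (Ty.sum B C) (Sum.inr (t.eval v)) ++ w₂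
        = (w₁ ++ some true :: List.replicate (padr B C) (none : Cell))
          ++ C.encode (t.eval v) ++ w₂ := by
      simp [Ty.encode]
    rw [e1, e2, e3, e4]
    exact ⟨n, ht⟩
  | @case A B C D s t ihs iht =>
    intro v tail l₁ l₂ rest w₁ w₂ ws hne
    obtain ⟨x, c⟩ := v
    cases x with
    | inl a =>
      have henc : Ty.encode (.prod (.sum A B) C) (Sum.inl a, c)
          = (some false :: List.replicate (padl A B) (none : Cell))
              ++ Ty.encode (.prod A C) (a, c) := by
        simp [Ty.encode]
      have hread : readI ⟨⟨l₁ ++ Ty.encode (.prod (.sum A B) C) (Sum.inl a, c) ++ l₂, l₁.length⟩ :: rest,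
          ⟨w₁ ++ List.replicate D.bitSize (none : Cell) ++ w₂, w₁.length⟩ :: ws⟩ = some false := by
        have hget : (l₁ ++ Ty.encode (.prod (.sum A B) C) (Sum.inl a, c) ++ l₂)[l₁.length]?
            = some (some false) := by
          rw [List.append_assoc, getElem?_app _ _ rfl, henc]; simp
        simp only [readI]
        rw [hget]
      have e1 : l₁ ++ Ty.encode (.prod (.sum A B) C) (Sum.inl a, c) ++ l₂
          = (l₁ ++ (some false :: List.replicate (padl A B) (none : Cell)))
              ++ Ty.encode (.prod A C) (a, c) ++ l₂ := by
        rw [henc]; simp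
      have e2 : l₁.length + (1 + padl A B)
          = (l₁ ++ (some false :: List.replicate (padl A B) (none : Cell))).length := by
        simp; omega
      have e3 : (l₁ ++ (some false :: List.replicate (padl A B) (none : Cell))).length
          - (1 + padl A B) = l₁.length := by simp; omega
      have hfwd := instr_some (fwdI_eq (1 + padl A B)
        (l₁ ++ Ty.encode (.prod (.sum A B) C) (Sum.inl a, c) ++ l₂) l₁.length rest
        (⟨w₁ ++ List.replicate D.bitSize (none : Cell) ++ w₂, w₁.length⟩ :: ws)
        (by simp [henc]; omega))
      obtain ⟨n, hrun⟩ := ihs (a, c) tail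
        (l₁ ++ (some false :: List.replicate (padl A B) (none : Cell))) l₂ rest w₁ w₂ ws hne
      cases tail with
      | true =>
        simp only [runTCO]
        rw [hread]
        refine seqRun_ex hfwd ?_
        rw [e1, e2]
        refine ⟨n, ?_⟩
        rw [hrun]
        simp [Term.eval]
      | false =>
        simp only [runTCO]
        rw [hread]
        refine seqRun_ex hfwd ?_
        rw [e1, e2]
        refine seqRun_ex hrun ?_
        simp only [Bool.false_eq_true, if_false]
        refine instr_ex ?_
        rw [bwdI_eq _ _ _ _ _ (by simp; omega)]
        rw [← e1, e3]
        simp [Term.eval]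
    | inr b =>
      have henc : Ty.encode (.prod (.sum A B) C) (Sum.inr b, c)
          = (some true :: List.replicate (padr A B) (none : Cell))
              ++ Ty.encode (.prod B C) (b, c) := by
        simp [Ty.encode]
      have hread : readI ⟨⟨l₁ ++ Ty.encode (.prod (.sum A B) C) (Sum.inr b, c) ++ l₂, l₁.length⟩ :: rest,
          ⟨w₁ ++ List.replicate D.bitSize (none : Cell) ++ w₂, w₁.length⟩ :: ws⟩ = some true := by
        have hget : (l₁ ++ Ty.encode (.prod (.sum A B) C) (Sum.inr b, c) ++ l₂)[l₁.length]?
            = some (some true) := by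
          rw [List.append_assoc, getElem?_app _ _ rfl, henc]; simp
        simp only [readI]
        rw [hget]
      have e1 : l₁ ++ Ty.encode (.prod (.sum A B) C) (Sum.inr b, c) ++ l₂
          = (l₁ ++ (some true :: List.replicate (padr A B) (none : Cell)))
              ++ Ty.encode (.prod B C) (b, c) ++ l₂ := by
        rw [henc]; simp
      have e2 : l₁.length + (1 + padr A B)
          = (l₁ ++ (some true :: List.replicate (padr A B) (none : Cell))).length := by
        simp; omega
      have e3 : (l₁ ++ (some true :: List.replicate (padr A B) (none : Cell))).length
          - (1 + padr A B) = l₁.length := by simp; omega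
      have hfwd := instr_some (fwdI_eq (1 + padr A B)
        (l₁ ++ Ty.encode (.prod (.sum A B) C) (Sum.inr b, c) ++ l₂) l₁.length rest
        (⟨w₁ ++ List.replicate D.bitSize (none : Cell) ++ w₂, w₁.length⟩ :: ws)
        (by simp [henc]; omega))
      obtain ⟨n, hrun⟩ := iht (b, c) tail
        (l₁ ++ (some true :: List.replicate (padr A B) (none : Cell))) l₂ rest w₁ w₂ ws hne
      cases tail with
      | true =>
        simp only [runTCO]
        rw [hread]
        refine seqRun_ex hfwd ?_
        rw [e1, e2]
        refine ⟨n, ?_⟩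
        rw [hrun]
        simp [Term.eval]
      | false =>
        simp only [runTCO]
        rw [hread]
        refine seqRun_ex hfwd ?_
        rw [e1, e2]
        refine seqRun_ex hrun ?_
        simp only [Bool.false_eq_true, if_false]
        refine instr_ex ?_
        rw [bwdI_eq _ _ _ _ _ (by simp; omega)]
        rw [← e1, e3]
        simp [Term.eval]
  | @pair A B C s t ihs iht =>
    intro v tail l₁ l₂ rest w₁ w₂ ws hne
    have hsplit : List.replicate ((Ty.prod B C).bitSize) (none : Cell)
        = List.replicate B.bitSize (none : Cell) ++ List.replicate C.bitSize (none : Cell) :=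
      List.replicate_add _ _ _
    obtain ⟨n₁, hs⟩ := ihs v false l₁ l₂ rest w₁
      (List.replicate C.bitSize (none : Cell) ++ w₂) ws (by simp)
    obtain ⟨n₂, ht⟩ := iht v tail l₁ l₂ rest (w₁ ++ B.encode (s.eval v)) w₂ ws hne
    simp only [Bool.false_eq_true, if_false] at hs
    simp only [runTCO, hsplit, Term.eval]
    have e0 : w₁ ++ (List.replicate B.bitSize (none : Cell)
          ++ List.replicate C.bitSize (none : Cell)) ++ w₂
        = w₁ ++ List.replicate B.bitSize (none : Cell)
          ++ (List.replicate C.bitSize (none : Cell) ++ w₂) := by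
      simp only [List.append_assoc]
    rw [e0]
    refine seqRun_ex hs ?_
    have e1 : w₁.length + B.bitSize = (w₁ ++ B.encode (s.eval v)).length := by
      simp [Ty.encode_length]
    have e2 : w₁ ++ B.encode (s.eval v) ++ (List.replicate C.bitSize (none : Cell) ++ w₂)
        = (w₁ ++ B.encode (s.eval v)) ++ List.replicate C.bitSize (none : Cell) ++ w₂ := by
      simp only [List.append_assoc]
    have e3 : w₁.length + (Ty.prod B C).bitSize
        = (w₁ ++ B.encode (s.eval v)).length + C.bitSize := by
      simp [Ty.encode_length, Ty.bitSize]; omega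
    have e4 : w₁ ++ Ty.encode (Ty.prod B C) (s.eval v, t.eval v) ++ w₂
        = (w₁ ++ B.encode (s.eval v)) ++ C.encode (t.eval v) ++ w₂ := by
      simp [Ty.encode]
    rw [e1, e2, e3, e4]
    exact ⟨n₂, ht⟩
  | @take A B C t ih =>
    intro v tail l₁ l₂ rest w₁ w₂ ws hne
    obtain ⟨a, b⟩ := v
    obtain ⟨n, ht⟩ := ih a tail l₁ (B.encode b ++ l₂) rest w₁ w₂ ws hne
    have e1 : l₁ ++ Ty.encode (.prod A B) (a, b) ++ l₂
        = l₁ ++ A.encode a ++ (B.encode b ++ l₂) := by simp [Ty.encode]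
    simp only [runTCO, e1, Term.eval]
    refine ⟨n, ?_⟩
    rw [ht]
  | @drop A B C t ih =>
    intro v tail l₁ l₂ rest w₁ w₂ ws hne
    obtain ⟨a, b⟩ := v
    have e1 : l₁ ++ Ty.encode (.prod A B) (a, b) ++ l₂
        = (l₁ ++ A.encode a) ++ B.encode b ++ l₂ := by simp [Ty.encode]
    have e2 : l₁.length + A.bitSize = (l₁ ++ A.encode a).length := by
      simp [Ty.encode_length]
    have e3 : (l₁ ++ A.encode a).length - A.bitSize = l₁.length := by
      simp [Ty.encode_length]
    have hfwd := instr_some (fwdI_eq A.bitSize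
      (l₁ ++ Ty.encode (.prod A B) (a, b) ++ l₂) l₁.length rest
      (⟨w₁ ++ List.replicate C.bitSize (none : Cell) ++ w₂, w₁.length⟩ :: ws)
      (by simp [Ty.encode, Ty.encode_length]))
    obtain ⟨n, ht⟩ := ih b tail (l₁ ++ A.encode a) l₂ rest w₁ w₂ ws hne
    cases tail with
    | true =>
      simp only [runTCO, reduceIte]
      refine seqRun_ex hfwd ?_
      rw [e1, e2]
      refine ⟨n, ?_⟩
      rw [ht]
      simp [Term.eval]
    | false =>
      simp only [runTCO, Bool.false_eq_true, if_false]
      refine seqRun_ex hfwd ?_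
      rw [e1, e2]
      refine seqRun_ex ht ?_
      simp only [Bool.false_eq_true, if_false]
      refine instr_ex ?_
      rw [bwdI_eq _ _ _ _ _ (by simp [Ty.encode_length])]
      rw [← e1, e3]
      simp [Term.eval]

theorem runTCO_correct (A B : Ty) (t : Term A B) (v : A.interp) :
    ∃ n : ℕ, runTCO t false (initState A B v) = some (finalState A B v (t.eval v), n) := by
  obtain ⟨n, h⟩ := runTCO_main t v false [] [] [] [] [] [] (by simp)
  refine ⟨n, ?_⟩
  simpa [initState, finalState] using h
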